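/- arXiv:1712.06648 — 5 statements merged into one kernel-verified Lean document; each statement's English description precedes it below -/
import Mathlib

section
/- A monic polynomial sequence {W_n} with structure coefficients β_n and χ_{n,ν} is symmetric (i.e., W_n(-x) = (-1)^n W_n(x) for all n) if and only if β_n = 0 for all n ≥ 0, χ_{2n+1,2ν} = 0 for 0 ≤ ν ≤ n, n ≥ 0, and χ_{2n,2ν+1} = 0 for 0 ≤ ν ≤ n-1, n ≥ 1. -/
open Polynomial

/-- Linear independence of a monic sequence with strictly increasing degrees. -/
lemma indep_aux (W : ℕ → Polynomial ℂ)
    (hW : ∀ n, (W n).Monic ∧ (W n).natDegree = n) :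
    ∀ m (c : ℕ → ℂ), ∑ ν ∈ Finset.range m, C (c ν) * W ν = 0 → ∀ ν, ν < m → c ν = 0 := by
  intro m
  induction m with
  | zero => intro c _ ν hν; omega
  | succ m ih =>
    intro c hsum ν hν
    rw [Finset.sum_range_succ] at hsum
    have hcm : c m = 0 := by
      have h := congrArg (fun p => p.coeff m) hsum
      simp only [coeff_add, coeff_zero] at h
      rw [finset_sum_coeff] at h
      have h0 : ∀ x ∈ Finset.range m, (C (c x) * W x).coeff m = 0 := by
        intro x hx
        apply coeff_eq_zero_of_natDegree_lt
        exact lt_of_le_of_lt ((natDegree_C_mul_le _ _).trans (hW x).2.le)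
          (Finset.mem_range.mp hx)
      rw [Finset.sum_eq_zero h0, zero_add, coeff_C_mul] at h
      have h1 : (W m).coeff m = 1 := by
        have := (hW m).1.coeff_natDegree
        rwa [(hW m).2] at this
      rw [h1, mul_one] at h
      exact h
    rcases eq_or_lt_of_le (Nat.lt_succ_iff.mp hν) with rfl | h
    · exact hcm
    · apply ih c ?_ ν h
      rw [hcm] at hsum
      simpa using hsum

lemma hpow : ∀ k l : ℕ, k % 2 = l % 2 → ((-1 : ℂ)) ^ k = (-1) ^ l := by
  intro k l hkl
  rcases Nat.even_or_odd k with hk | hk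
  · rw [hk.neg_one_pow,
      Even.neg_one_pow (Nat.even_iff.mpr (by rw [← hkl]; exact Nat.even_iff.mp hk))]
  · rw [hk.neg_one_pow,
      Odd.neg_one_pow (Nat.odd_iff.mpr (by rw [← hkl]; exact Nat.odd_iff.mp hk))]

/-- A monic polynomial sequence is symmetric (W_n(-x) = (-1)^n W_n(x)) if and only if
β_n = 0 for all n, χ_{2n+1,2ν} = 0 for 0 ≤ ν ≤ n, and χ_{2n,2ν+1} = 0 for
0 ≤ ν ≤ n-1, n ≥ 1. -/
theorem symmetric_iff_structure_coefficients (W : ℕ → Polynomial ℂ)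
    (β : ℕ → ℂ) (χ : ℕ → ℕ → ℂ)
    (hW : ∀ n, (W n).Monic ∧ (W n).natDegree = n)
    (hW0 : W 0 = 1) (hW1 : W 1 = X - C (β 0))
    (hrec : ∀ n, W (n + 2) =
      (X - C (β (n + 1))) * W (n + 1) - ∑ ν ∈ Finset.range (n + 1), C (χ n ν) * W ν) :
    (∀ n, (W n).comp (-X) = C ((-1 : ℂ) ^ n) * W n) ↔
      ((∀ n, β n = 0) ∧
       (∀ n ν, ν ≤ n → χ (2 * n + 1) (2 * ν) = 0) ∧
       (∀ n ν, ν + 1 ≤ n → χ (2 * n) (2 * ν + 1) = 0)) := by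
  constructor
  · intro hsym
    -- β 0 = 0 from the degree-one case
    have hβ0 : β 0 = 0 := by
      have h := hsym 1
      rw [hW1] at h
      simp only [sub_comp, X_comp, C_comp, pow_one, map_neg, map_one] at h
      have h0 := congrArg (fun p => p.coeff 0) h
      simp at h0
      linear_combination -h0 / 2
    -- key computation for n + 2
    have hkey : ∀ n, β (n + 1) = 0 ∧
        ∀ ν, ν ≤ n → (1 - (-1 : ℂ) ^ (n + ν)) * χ n ν = 0 := by
      intro n
      have e1 : ((-1 : ℂ)) ^ (n + 2) * (-1) ^ (n + 2) = 1 := by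
        rw [← pow_add]
        exact Even.neg_one_pow ⟨n + 2, by ring⟩
      have e2 : ((-1 : ℂ)) ^ (n + 2) * (-1) ^ (n + 1) = -1 := by
        rw [← pow_add, show n + 2 + (n + 1) = 2 * (n + 1) + 1 by ring, pow_succ]
        rw [pow_mul]
        norm_num
      have e3 : ∀ ν, ((-1 : ℂ)) ^ (n + 2) * (-1) ^ ν = (-1) ^ (n + ν) := by
        intro ν
        rw [← pow_add, show n + 2 + ν = (n + ν) + 2 by ring, pow_add]
        norm_num
      -- comp the recurrence
      have hcomp : C ((-1 : ℂ) ^ (n + 2)) * W (n + 2) =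
          (-X - C (β (n + 1))) * (C ((-1 : ℂ) ^ (n + 1)) * W (n + 1))
            - ∑ ν ∈ Finset.range (n + 1), C (χ n ν) * (C ((-1 : ℂ) ^ ν) * W ν) := by
        rw [← hsym (n + 2)]
        conv_lhs => rw [hrec n]
        rw [sub_comp, mul_comp, sub_comp, X_comp, C_comp]
        rw [show (∑ ν ∈ Finset.range (n + 1), C (χ n ν) * W ν).comp (-X)
            = ∑ ν ∈ Finset.range (n + 1), (C (χ n ν) * W ν).comp (-X) from
          map_sum (compRingHom (-X)) _ _]
        rw [hsym (n + 1)]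
        congr 1
        refine Finset.sum_congr rfl fun ν _ => ?_
        rw [mul_comp, C_comp, hsym ν]
      -- multiply by C ((-1)^(n+2))
      have hcomp2 : W (n + 2) = (X + C (β (n + 1))) * W (n + 1)
          - ∑ ν ∈ Finset.range (n + 1), C ((-1 : ℂ) ^ (n + ν) * χ n ν) * W ν := by
        have h := congrArg (fun p => C ((-1 : ℂ) ^ (n + 2)) * p) hcomp
        simp only [mul_sub, Finset.mul_sum] at h
        rw [← mul_assoc, ← C_mul, e1, map_one, one_mul] at h
        rw [h]
        congr 1
        · have : C ((-1 : ℂ) ^ (n + 2)) * ((-X - C (β (n + 1))) *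
              (C ((-1 : ℂ) ^ (n + 1)) * W (n + 1)))
              = (C ((-1 : ℂ) ^ (n + 2) * (-1) ^ (n + 1))) * ((-X - C (β (n + 1))) * W (n + 1)) := by
            rw [C_mul]; ring
          rw [this, e2]
          simp only [map_neg, map_one]
          ring
        · refine Finset.sum_congr rfl fun ν _ => ?_
          rw [← e3 ν]
          simp only [C_mul]
          ring
      -- form the linear relation
      have hid : ∑ ν ∈ Finset.range (n + 2),
          C (if ν = n + 1 then 2 * β (n + 1) else (1 - (-1 : ℂ) ^ (n + ν)) * χ n ν) * W ν = 0 := by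
        rw [Finset.sum_range_succ, if_pos rfl]
        have hifs : ∑ ν ∈ Finset.range (n + 1),
            C (if ν = n + 1 then 2 * β (n + 1) else (1 - (-1 : ℂ) ^ (n + ν)) * χ n ν) * W ν
            = ∑ ν ∈ Finset.range (n + 1), C ((1 - (-1 : ℂ) ^ (n + ν)) * χ n ν) * W ν := by
          refine Finset.sum_congr rfl fun ν hν => ?_
          rw [if_neg (by have := Finset.mem_range.mp hν; omega)]
        rw [hifs]
        have hsplit : ∑ ν ∈ Finset.range (n + 1), C ((1 - (-1 : ℂ) ^ (n + ν)) * χ n ν) * W ν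
            = (∑ ν ∈ Finset.range (n + 1), C (χ n ν) * W ν)
              - ∑ ν ∈ Finset.range (n + 1), C ((-1 : ℂ) ^ (n + ν) * χ n ν) * W ν := by
          rw [← Finset.sum_sub_distrib]
          refine Finset.sum_congr rfl fun ν _ => ?_
          rw [C_mul, C_mul, map_sub, map_one]
          ring
        rw [hsplit, C_mul, map_ofNat]
        linear_combination hrec n - hcomp2
      have hz := indep_aux W hW (n + 2) _ hid
      constructor
      · have := hz (n + 1) (by omega)
        rw [if_pos rfl] at this
        linear_combination this / 2
      · intro ν hν
        have := hz ν (by omega)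
        rwa [if_neg (by omega)] at this
    refine ⟨?_, ?_, ?_⟩
    · intro n
      cases n with
      | zero => exact hβ0
      | succ n => exact (hkey n).1
    · intro n ν hν
      have h := (hkey (2 * n + 1)).2 (2 * ν) (by omega)
      rw [show 2 * n + 1 + 2 * ν = 2 * (n + ν) + 1 by ring] at h
      rw [pow_succ, pow_mul] at h
      norm_num at h
      exact h
    · intro n ν hν
      have h := (hkey (2 * n)).2 (2 * ν + 1) (by omega)
      rw [show 2 * n + (2 * ν + 1) = 2 * (n + ν) + 1 by ring] at h
      rw [pow_succ, pow_mul] at h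
      norm_num at h
      exact h
  · rintro ⟨hβ, hχodd, hχeven⟩
    intro n
    induction n using Nat.strong_induction_on with
    | _ n ih =>
      match n, ih with
      | 0, _ => simp [hW0]
      | 1, _ =>
        rw [hW1, hβ 0]
        simp only [map_zero, sub_zero, X_comp, pow_one, map_neg, map_one]
        ring
      | (n + 2), ih =>
        rw [hrec n]
        rw [sub_comp, mul_comp, sub_comp, X_comp, C_comp]
        rw [show (∑ ν ∈ Finset.range (n + 1), C (χ n ν) * W ν).comp (-X)
            = ∑ ν ∈ Finset.range (n + 1), (C (χ n ν) * W ν).comp (-X) from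
          map_sum (compRingHom (-X)) _ _]
        rw [ih (n + 1) (by omega)]
        have hsum : ∑ ν ∈ Finset.range (n + 1), (C (χ n ν) * W ν).comp (-X)
            = C ((-1 : ℂ) ^ (n + 2)) * ∑ ν ∈ Finset.range (n + 1), C (χ n ν) * W ν := by
          rw [Finset.mul_sum]
          refine Finset.sum_congr rfl fun ν hν => ?_
          have hν' : ν ≤ n := by have := Finset.mem_range.mp hν; omega
          rw [mul_comp, C_comp, ih ν (by omega)]
          have key : χ n ν * (-1 : ℂ) ^ ν = χ n ν * (-1) ^ (n + 2) := by
            rcases Nat.even_or_odd (n + ν) with he | ho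
            · rw [hpow ν (n + 2) (by have := Nat.even_iff.mp he; omega)]
            · have hχ0 : χ n ν = 0 := by
                obtain ⟨j, hj⟩ := ho
                rcases Nat.even_or_odd n with ⟨m, hm⟩ | ⟨m, hm⟩
                · -- n even, so ν odd
                  obtain ⟨k, hk⟩ : Odd ν := by
                    rcases Nat.even_or_odd ν with ⟨k, hk⟩ | h
                    · omega
                    · exact h
                  rw [show n = 2 * m by omega, show ν = 2 * k + 1 by omega]
                  exact hχeven m k (by omega)
                · -- n odd, so ν even
                  obtain ⟨k, hk⟩ : Even ν := by
                    rcases Nat.even_or_odd ν with h | ⟨k, hk⟩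
                    · exact h
                    · omega
                  rw [show n = 2 * m + 1 by omega, show ν = 2 * k by omega]
                  exact hχodd m k (by omega)
              rw [hχ0]; ring
          calc C (χ n ν) * (C ((-1 : ℂ) ^ ν) * W ν)
              = C (χ n ν * (-1 : ℂ) ^ ν) * W ν := by rw [C_mul]; ring
            _ = C (χ n ν * (-1 : ℂ) ^ (n + 2)) * W ν := by rw [key]
            _ = C ((-1 : ℂ) ^ (n + 2)) * (C (χ n ν) * W ν) := by rw [C_mul]; ring
        rw [hsum, hβ (n + 1)]
        have e : (-X - C (0 : ℂ)) * (C ((-1 : ℂ) ^ (n + 1)) * W (n + 1))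
            = C ((-1 : ℂ) ^ (n + 2)) * ((X - C (0 : ℂ)) * W (n + 1)) := by
          rw [show ((-1 : ℂ)) ^ (n + 2) = -(-1 : ℂ) ^ (n + 1) by rw [pow_succ]; ring]
          simp only [map_zero, sub_zero, map_neg]
          ring
        rw [e, ← mul_sub]
end

section
/- Let {W_n} be a monic polynomial sequence with structure coefficients β_n, χ_{n,ν}, and let P_n, R_n, a_n, b_n be the components of its general quadratic decomposition W_{2n}(x) = P_n(ω(x)) + (x-a) a_{n-1}(ω(x)), W_{2n+1}(x) = b_n(ω(x)) + (x-a) R_n(ω(x)) with ω(x) = x² + px + q. Then b_0(x) = a - β_0, and for n ≥ 0: P_{n+1}(x) = -Σ_{ν=0}^n χ_{2n,2ν} P_ν(x) + (x - ω(a)) R_n(x) + (a - β_{2n+1}) b_n(x) - Σ_{ν=0}^{n-1} χ_{2n,2ν+1} b_ν(x). -/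
open Polynomial

noncomputable def om (p q : ℂ) : Polynomial ℂ := X ^ 2 + C p * X + C q

lemma om_natDegree (p q : ℂ) : (om p q).natDegree = 2 := by
  unfold om; compute_degree!

lemma om_monic (p q : ℂ) : (om p q).Monic := by
  unfold om; monicity!

lemma comp_om_eq_zero {p q : ℂ} {H : Polynomial ℂ} (h : H.comp (om p q) = 0) : H = 0 := by
  by_contra hH
  have : (H.comp (om p q)).leadingCoeff ≠ 0 := by
    rw [leadingCoeff_comp (by rw [om_natDegree]; norm_num)]
    simp [(om_monic p q).leadingCoeff, leadingCoeff_ne_zero.mpr hH]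
  exact this (by simp [h])

lemma uniq {p q a : ℂ} {F G : Polynomial ℂ}
    (h : F.comp (om p q) + (X - C a) * G.comp (om p q) = 0) : F = 0 ∧ G = 0 := by
  have hG : G = 0 := by
    by_contra hG
    have hGc : G.comp (om p q) ≠ 0 := fun hc => hG (comp_om_eq_zero hc)
    have hX : (X - C a : Polynomial ℂ) ≠ 0 := X_sub_C_ne_zero a
    have hF : F ≠ 0 := by
      rintro rfl
      simp only [zero_comp, zero_add] at h
      exact (mul_ne_zero hX hGc) h
    have hFe : F.comp (om p q) = -((X - C a) * G.comp (om p q)) := by linear_combination h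
    have h1 : (F.comp (om p q)).natDegree = F.natDegree * 2 := by rw [natDegree_comp, om_natDegree]
    have h2 : (F.comp (om p q)).natDegree = 1 + G.natDegree * 2 := by
      rw [hFe, natDegree_neg, natDegree_mul hX hGc, natDegree_X_sub_C, natDegree_comp, om_natDegree]
    omega
  subst hG
  simp only [zero_comp, mul_zero, add_zero] at h
  exact ⟨comp_om_eq_zero h, rfl⟩

lemma sum_split (f : ℕ → Polynomial ℂ) (n : ℕ) :
    ∑ ν ∈ Finset.range (2 * n + 1), f ν =
      ∑ k ∈ Finset.range (n + 1), f (2 * k) + ∑ k ∈ Finset.range n, f (2 * k + 1) := by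
  induction n with
  | zero => simp
  | succ m ih =>
      have : 2 * (m + 1) + 1 = (2 * m + 1) + 1 + 1 := by ring
      rw [this, Finset.sum_range_succ, Finset.sum_range_succ, ih,
        Finset.sum_range_succ, Finset.sum_range_succ]
      have h1 : 2 * (m + 1) = 2 * m + 2 := by ring
      have h2 : 2 * m + 1 + 1 = 2 * m + 2 := by ring
      rw [h1, h2, Finset.sum_range_succ, Finset.sum_range_succ]; ring

/-- Recurrence for the principal component P of the general quadratic decomposition
of a monic polynomial sequence with structure coefficients β, χ:
b₀(x) = a - β₀ and
P_{n+1}(x) = -Σ_{ν=0}^n χ_{2n,2ν} P_ν(x) + (x - ω(a)) R_n(x) + (a - β_{2n+1}) b_n(x)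
             - Σ_{ν=0}^{n-1} χ_{2n,2ν+1} b_ν(x).
Here `aa n` stands for a_{n-1} (with `aa 0 = 0`). -/
theorem gqd_principal_P_recurrence (W P R aa bb : ℕ → Polynomial ℂ)
    (β : ℕ → ℂ) (χ : ℕ → ℕ → ℂ) (p q a : ℂ)
    (hW : ∀ n, (W n).Monic ∧ (W n).natDegree = n)
    (hW0 : W 0 = 1) (hW1 : W 1 = X - C (β 0))
    (hrec : ∀ n, W (n + 2) =
      (X - C (β (n + 1))) * W (n + 1) - ∑ ν ∈ Finset.range (n + 1), C (χ n ν) * W ν)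
    (hP : ∀ n, (P n).Monic ∧ (P n).natDegree = n)
    (hR : ∀ n, (R n).Monic ∧ (R n).natDegree = n)
    (haa0 : aa 0 = 0) (haadeg : ∀ n, (aa (n + 1)).degree ≤ n)
    (hbbdeg : ∀ n, (bb n).degree ≤ n)
    (hEven : ∀ n, W (2 * n) =
      (P n).comp (X ^ 2 + C p * X + C q) +
        (X - C a) * (aa n).comp (X ^ 2 + C p * X + C q))
    (hOdd : ∀ n, W (2 * n + 1) =
      (bb n).comp (X ^ 2 + C p * X + C q) +
        (X - C a) * (R n).comp (X ^ 2 + C p * X + C q)) :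
    bb 0 = C (a - β 0) ∧
    ∀ n, P (n + 1) =
      -(∑ ν ∈ Finset.range (n + 1), C (χ (2 * n) (2 * ν)) * P ν) +
        (X - C (a ^ 2 + p * a + q)) * R n + C (a - β (2 * n + 1)) * bb n -
        ∑ ν ∈ Finset.range n, C (χ (2 * n) (2 * ν + 1)) * bb ν := by
  have hom : (X ^ 2 + C p * X + C q : Polynomial ℂ) = om p q := rfl
  simp only [hom] at hEven hOdd
  constructor
  · -- bb 0 = C (a - β 0)
    obtain ⟨c, hbb0⟩ : ∃ c, bb 0 = C c :=
      ⟨(bb 0).coeff 0, eq_C_of_degree_le_zero (by simpa using hbbdeg 0)⟩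
    have hR0 : R 0 = 1 := ((hR 0).1.natDegree_eq_zero).mp (hR 0).2
    have h0 := hOdd 0
    norm_num [hW1, hR0, hbb0, om] at h0
    rw [hbb0, map_sub]
    linear_combination -h0
  · intro n
    set ω := om p q with hωdef
    set T : Polynomial ℂ :=
      -(∑ ν ∈ Finset.range (n + 1), C (χ (2 * n) (2 * ν)) * P ν) +
        (X - C (a ^ 2 + p * a + q)) * R n + C (a - β (2 * n + 1)) * bb n -
        ∑ ν ∈ Finset.range n, C (χ (2 * n) (2 * ν + 1)) * bb ν with hT
    set Q : Polynomial ℂ :=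
      bb n - C (a + p + β (2 * n + 1)) * R n -
        ∑ k ∈ Finset.range (n + 1), C (χ (2 * n) (2 * k)) * aa k -
        ∑ k ∈ Finset.range n, C (χ (2 * n) (2 * k + 1)) * R k with hQ
    have key : (P (n + 1) - T).comp ω + (X - C a) * (aa (n + 1) - Q).comp ω = 0 := by
      have main : (P (n + 1)).comp ω + (X - C a) * (aa (n + 1)).comp ω =
          T.comp ω + (X - C a) * Q.comp ω := by
        have hE := hEven (n + 1)
        rw [show 2 * (n + 1) = 2 * n + 2 from by ring] at hE
        have h := hrec (2 * n)
        rw [sum_split (fun ν => C (χ (2 * n) ν) * W ν) n] at h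
        simp only [hEven, hOdd] at h
        rw [hE] at h
        rw [h, hT, hQ]
        simp only [add_comp, sub_comp, neg_comp, mul_comp, pow_comp, sum_comp, C_comp, X_comp,
          map_add, map_mul, map_pow, map_sub]
        rw [show (∑ k ∈ Finset.range (n + 1),
              (C (χ (2 * n) (2 * k)) * ((P k).comp ω + (X - C a) * (aa k).comp ω))) =
            (∑ k ∈ Finset.range (n + 1), C (χ (2 * n) (2 * k)) * (P k).comp ω) +
            (X - C a) * ∑ k ∈ Finset.range (n + 1), C (χ (2 * n) (2 * k)) * (aa k).comp ω from by
          rw [Finset.mul_sum, ← Finset.sum_add_distrib]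
          exact Finset.sum_congr rfl fun k _ => by ring]
        rw [show (∑ k ∈ Finset.range n,
              (C (χ (2 * n) (2 * k + 1)) * ((bb k).comp ω + (X - C a) * (R k).comp ω))) =
            (∑ k ∈ Finset.range n, C (χ (2 * n) (2 * k + 1)) * (bb k).comp ω) +
            (X - C a) * ∑ k ∈ Finset.range n, C (χ (2 * n) (2 * k + 1)) * (R k).comp ω from by
          rw [Finset.mul_sum, ← Finset.sum_add_distrib]
          exact Finset.sum_congr rfl fun k _ => by ring]
        rw [show ω = X ^ 2 + C p * X + C q from rfl]
        ring
      simp only [sub_comp]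
      linear_combination main
    exact sub_eq_zero.mp (uniq key).1
end

section
/- Let {W_n} be a monic orthogonal polynomial sequence with recurrence coefficients β_n, γ_{n+1} (γ_{n+1} ≠ 0), and let P_n, R_n, a_n, b_n be the components of its general quadratic decomposition with parameters ω(x) = x² + px + q and a. Then a_0(x) = -(p + β_0 + β_1), b_0(x) = a - β_0, and for all n ≥ 0: b_{n+1}(x) = -γ_{2n+2} b_n(x) + (a - β_{2n+2}) P_{n+1}(x) + (x - ω(a)) a_n(x), and a_{n+1}(x) = -γ_{2n+3} a_n(x) - (a + p + β_{2n+3}) R_{n+1}(x) + b_{n+1}(x). -/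
open Polynomial

lemma gqd_key (p q a : ℂ) (u v : Polynomial ℂ)
    (h : u.comp (X ^ 2 + C p * X + C q) + (X - C a) * v.comp (X ^ 2 + C p * X + C q) = 0) :
    u = 0 ∧ v = 0 := by
  set ω : Polynomial ℂ := X ^ 2 + C p * X + C q with hωdef
  have hωdeg : ω.natDegree = 2 := by
    unfold ω; compute_degree!
  have hωnC : ∀ c : ℂ, ω ≠ C c := by
    intro c hc
    have := hωdeg
    rw [hc] at this
    simp at this
  have heval : ∀ x : ℂ, eval x ω = x ^ 2 + p * x + q := by
    intro x; simp [hωdef]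
  have hcomp0 : ∀ w : Polynomial ℂ, w.comp ω = 0 → w = 0 := by
    intro w hw
    rcases (comp_eq_zero_iff).mp hw with h1 | ⟨_, h2⟩
    · exact h1
    · exact absurd h2 (hωnC _)
  have hv : v.comp ω = 0 := by
    have hroots : ∀ x : ℂ, 2 * x + p ≠ 0 → (v.comp ω).IsRoot x := by
      intro x hx
      have h1 := congrArg (eval x) h
      have h2 := congrArg (eval (-p - x)) h
      simp only [eval_add, eval_mul, eval_sub, eval_X, eval_C, eval_comp, eval_zero, heval] at h1 h2
      have e : (-p - x) ^ 2 + p * (-p - x) + q = x ^ 2 + p * x + q := by ring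
      rw [e] at h2
      have h3 : (2 * x + p) * eval (x ^ 2 + p * x + q) v = 0 := by linear_combination h1 - h2
      have h4 : eval (x ^ 2 + p * x + q) v = 0 := by
        rcases mul_eq_zero.mp h3 with h | h
        · exact absurd h hx
        · exact h
      simp [IsRoot, eval_comp, heval, h4]
    apply Polynomial.eq_zero_of_infinite_isRoot
    have hinf : {x : ℂ | 2 * x + p ≠ 0}.Infinite := by
      have hfin : {x : ℂ | 2 * x + p = 0}.Finite := by
        apply Set.Finite.subset (Set.finite_singleton (-p / 2))
        intro x hx
        simp only [Set.mem_setOf_eq] at hx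
        simp only [Set.mem_singleton_iff]
        linear_combination hx / 2
      exact hfin.infinite_compl
    exact hinf.mono (fun x hx => hroots x hx)
  have hv0 : v = 0 := hcomp0 v hv
  have hu : u.comp ω = 0 := by rw [hv0] at h; simpa using h
  exact ⟨hcomp0 u hu, hv0⟩

lemma gqd_unique (p q a : ℂ) (u₁ v₁ u₂ v₂ : Polynomial ℂ)
    (h : u₁.comp (X ^ 2 + C p * X + C q) + (X - C a) * v₁.comp (X ^ 2 + C p * X + C q)
       = u₂.comp (X ^ 2 + C p * X + C q) + (X - C a) * v₂.comp (X ^ 2 + C p * X + C q)) :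
    u₁ = u₂ ∧ v₁ = v₂ := by
  have h0 : (u₁ - u₂).comp (X ^ 2 + C p * X + C q)
      + (X - C a) * (v₁ - v₂).comp (X ^ 2 + C p * X + C q) = 0 := by
    simp only [sub_comp]
    linear_combination h
  obtain ⟨h1, h2⟩ := gqd_key p q a _ _ h0
  exact ⟨sub_eq_zero.mp h1, sub_eq_zero.mp h2⟩

/-- For the general quadratic decomposition of a monic *orthogonal* polynomial
sequence: a₀(x) = -(p + β₀ + β₁), b₀(x) = a - β₀, and for n ≥ 0,
b_{n+1}(x) = -γ_{2n+2} b_n(x) + (a - β_{2n+2}) P_{n+1}(x) + (x - ω(a)) a_n(x),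
a_{n+1}(x) = -γ_{2n+3} a_n(x) - (a + p + β_{2n+3}) R_{n+1}(x) + b_{n+1}(x).
Here `aa n` is a_n. -/
theorem gqd_secondary_recurrences_orthogonal (W P R aa bb : ℕ → Polynomial ℂ)
    (β : ℕ → ℂ) (γ : ℕ → ℂ) (p q a : ℂ)
    (hW0 : W 0 = 1) (hW1 : W 1 = X - C (β 0))
    (hrec : ∀ n, W (n + 2) = (X - C (β (n + 1))) * W (n + 1) - C (γ (n + 1)) * W n)
    (hγ : ∀ n, γ (n + 1) ≠ 0)
    (hP : ∀ n, (P n).Monic ∧ (P n).natDegree = n)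
    (hR : ∀ n, (R n).Monic ∧ (R n).natDegree = n)
    (haadeg : ∀ n, (aa n).degree ≤ n) (hbbdeg : ∀ n, (bb n).degree ≤ n)
    (hEven0 : W 0 = (P 0).comp (X ^ 2 + C p * X + C q))
    (hEven : ∀ n, W (2 * (n + 1)) =
      (P (n + 1)).comp (X ^ 2 + C p * X + C q) +
        (X - C a) * (aa n).comp (X ^ 2 + C p * X + C q))
    (hOdd : ∀ n, W (2 * n + 1) =
      (bb n).comp (X ^ 2 + C p * X + C q) +
        (X - C a) * (R n).comp (X ^ 2 + C p * X + C q)) :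
    aa 0 = C (-(p + β 0 + β 1)) ∧
    bb 0 = C (a - β 0) ∧
    (∀ n, bb (n + 1) =
      -C (γ (2 * n + 2)) * bb n + C (a - β (2 * n + 2)) * P (n + 1) +
        (X - C (a ^ 2 + p * a + q)) * aa n) ∧
    (∀ n, aa (n + 1) =
      -C (γ (2 * n + 3)) * aa n - C (a + p + β (2 * n + 3)) * R (n + 1) + bb (n + 1)) := by
  refine ⟨?_, ?_, ?_, ?_⟩
  · -- aa 0
    have hW2 : W 2 = (X - C (β 1)) * (X - C (β 0)) - C (γ 1) * 1 := by
      have := hrec 0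
      rw [hW0, hW1] at this
      exact this
    have hdec := hEven 0
    norm_num at hdec
    have heq : (P 1).comp (X ^ 2 + C p * X + C q) +
        (X - C a) * (aa 0).comp (X ^ 2 + C p * X + C q)
      = (X + C (β 0 * β 1 - γ 1 - q - a * (p + β 0 + β 1))).comp (X ^ 2 + C p * X + C q) +
        (X - C a) * (C (-(p + β 0 + β 1))).comp (X ^ 2 + C p * X + C q) := by
      rw [← hdec, hW2]
      simp only [add_comp, mul_comp, sub_comp, neg_comp, X_comp, C_comp, one_comp]
      simp only [map_sub, map_mul, map_add, map_neg]
      ring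
    exact (gqd_unique p q a _ _ _ _ heq).2
  · -- bb 0
    have hdec := hOdd 0
    norm_num at hdec
    have heq : (bb 0).comp (X ^ 2 + C p * X + C q) +
        (X - C a) * (R 0).comp (X ^ 2 + C p * X + C q)
      = (C (a - β 0)).comp (X ^ 2 + C p * X + C q) +
        (X - C a) * ((1 : Polynomial ℂ)).comp (X ^ 2 + C p * X + C q) := by
      rw [← hdec, hW1]
      simp only [C_comp, one_comp]
      simp only [map_sub]
      ring
    exact (gqd_unique p q a _ _ _ _ heq).1
  · -- bb recurrence
    intro n
    have hL : W (2 * n + 3) = (bb (n + 1)).comp (X ^ 2 + C p * X + C q) +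
        (X - C a) * (R (n + 1)).comp (X ^ 2 + C p * X + C q) := by
      have := hOdd (n + 1); rwa [show 2 * (n + 1) + 1 = 2 * n + 3 from by ring] at this
    have hE' : W (2 * n + 2) = (P (n + 1)).comp (X ^ 2 + C p * X + C q) +
        (X - C a) * (aa n).comp (X ^ 2 + C p * X + C q) := by
      have := hEven n; rwa [show 2 * (n + 1) = 2 * n + 2 from by ring] at this
    have hrec' := hrec (2 * n + 1)
    rw [show 2 * n + 1 + 2 = 2 * n + 3 from by ring,
        show 2 * n + 1 + 1 = 2 * n + 2 from by ring, hL, hE', hOdd n] at hrec'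
    have heq : (bb (n + 1)).comp (X ^ 2 + C p * X + C q) +
        (X - C a) * (R (n + 1)).comp (X ^ 2 + C p * X + C q)
      = (-C (γ (2 * n + 2)) * bb n + C (a - β (2 * n + 2)) * P (n + 1) +
          (X - C (a ^ 2 + p * a + q)) * aa n).comp (X ^ 2 + C p * X + C q) +
        (X - C a) * (P (n + 1) - C (p + a + β (2 * n + 2)) * aa n -
          C (γ (2 * n + 2)) * R n).comp (X ^ 2 + C p * X + C q) := by
      rw [hrec']
      simp only [add_comp, mul_comp, sub_comp, neg_comp, X_comp, C_comp]
      simp only [map_sub, map_mul, map_add, map_neg, map_pow]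
      ring
    exact (gqd_unique p q a _ _ _ _ heq).1
  · -- aa recurrence
    intro n
    have hL : W (2 * n + 4) = (P (n + 2)).comp (X ^ 2 + C p * X + C q) +
        (X - C a) * (aa (n + 1)).comp (X ^ 2 + C p * X + C q) := by
      have := hEven (n + 1); rwa [show 2 * (n + 1 + 1) = 2 * n + 4 from by ring] at this
    have hO' : W (2 * n + 3) = (bb (n + 1)).comp (X ^ 2 + C p * X + C q) +
        (X - C a) * (R (n + 1)).comp (X ^ 2 + C p * X + C q) := by
      have := hOdd (n + 1); rwa [show 2 * (n + 1) + 1 = 2 * n + 3 from by ring] at this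
    have hE' : W (2 * n + 2) = (P (n + 1)).comp (X ^ 2 + C p * X + C q) +
        (X - C a) * (aa n).comp (X ^ 2 + C p * X + C q) := by
      have := hEven n; rwa [show 2 * (n + 1) = 2 * n + 2 from by ring] at this
    have hrec' := hrec (2 * n + 2)
    rw [show 2 * n + 2 + 2 = 2 * n + 4 from by ring,
        show 2 * n + 2 + 1 = 2 * n + 3 from by ring, hL, hO', hE'] at hrec'
    have heq : (P (n + 2)).comp (X ^ 2 + C p * X + C q) +
        (X - C a) * (aa (n + 1)).comp (X ^ 2 + C p * X + C q)
      = (C (a - β (2 * n + 3)) * bb (n + 1) + (X - C (a ^ 2 + p * a + q)) * R (n + 1) -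
          C (γ (2 * n + 3)) * P (n + 1)).comp (X ^ 2 + C p * X + C q) +
        (X - C a) * (-C (γ (2 * n + 3)) * aa n - C (a + p + β (2 * n + 3)) * R (n + 1) +
          bb (n + 1)).comp (X ^ 2 + C p * X + C q) := by
      rw [hrec']
      simp only [add_comp, mul_comp, sub_comp, neg_comp, X_comp, C_comp]
      simp only [map_sub, map_mul, map_add, map_neg, map_pow]
      ring
    exact (gqd_unique p q a _ _ _ _ heq).2
end

section
/- Let {W_n} be a monic orthogonal polynomial sequence with recurrence coefficients β_n, γ_{n+1}, and let P_n, R_n, a_n, b_n be the components of its general quadratic decomposition with parameters p, q, a and ω(x) = x² + px + q. Then the {P_n} satisfy: P_0 = 1, P_1(x) = x - β_0^P with β_0^P = γ_1 + ω(a) - (a - β_0)(a - β_1), and P_{n+2}(x) = (x - β_{n+1}^P) P_{n+1}(x) - γ_{n+1}^P P_n(x) - ϱ_{n+1}^P b_{n+1}(x) - ρ_{n+1}^P b_n(x), where β_{n+1}^P = ω(a) + γ_{2n+2} + γ_{2n+3} - (β_{2n+2} + a + p)(a - β_{2n+2}), γ_{n+1}^P = γ_{2n+1} γ_{2n+2},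 ϱ_{n+1}^P = β_{2n+2} + β_{2n+3} + p, and ρ_{n+1}^P = γ_{2n+2}(β_{2n+1} + β_{2n+2} + p). -/
open Polynomial

private lemma gqd_wdeg (p q : ℂ) : (X ^ 2 + C p * X + C q : ℂ[X]).natDegree = 2 := by
  compute_degree!

private lemma gqd_split (p q a : ℂ) (A B : ℂ[X])
    (h : A.comp (X ^ 2 + C p * X + C q) +
        (X - C a) * B.comp (X ^ 2 + C p * X + C q) = 0) :
    A = 0 ∧ B = 0 := by
  set w : ℂ[X] := X ^ 2 + C p * X + C q with hw
  have hwdeg : w.natDegree = 2 := gqd_wdeg p q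
  have hwnc : ∀ c : ℂ, w ≠ C c := by
    intro c hc
    have h2 := hwdeg
    rw [hc, natDegree_C] at h2
    exact (by norm_num : (0:ℕ) ≠ 2) h2
  have hcomp : ∀ f : ℂ[X], f ≠ 0 → f.comp w ≠ 0 := by
    intro f hf hfz
    rcases comp_eq_zero_iff.mp hfz with h1 | ⟨h1, h2⟩
    · exact hf h1
    · exact hwnc _ h2
  by_cases hB : B = 0
  · subst hB
    simp only [zero_comp, mul_zero, add_zero] at h
    refine ⟨?_, rfl⟩
    by_contra hA
    exact hcomp A hA h
  · by_cases hA : A = 0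
    · exfalso
      subst hA
      simp only [zero_comp, zero_add] at h
      rcases mul_eq_zero.mp h with h1 | h1
      · exact X_sub_C_ne_zero a h1
      · exact hcomp B hB h1
    · exfalso
      have heq : A.comp w = -((X - C a) * B.comp w) := by linear_combination h
      have hd := congrArg natDegree heq
      rw [natDegree_neg, natDegree_mul (X_sub_C_ne_zero a) (hcomp B hB),
        natDegree_X_sub_C, natDegree_comp, natDegree_comp, hwdeg] at hd
      omega

private lemma gqd_step (p q a b' g' : ℂ) (F G f g u v : ℂ[X])
    (h : F.comp (X ^ 2 + C p * X + C q) +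
        (X - C a) * G.comp (X ^ 2 + C p * X + C q) =
      (X - C b') * (f.comp (X ^ 2 + C p * X + C q) +
          (X - C a) * g.comp (X ^ 2 + C p * X + C q)) -
        C g' * (u.comp (X ^ 2 + C p * X + C q) +
          (X - C a) * v.comp (X ^ 2 + C p * X + C q))) :
    F = C (a - b') * f + (X - C (a ^ 2 + p * a + q)) * g - C g' * u ∧
      G = f - C (b' + a + p) * g - C g' * v := by
  have key := gqd_split p q a
    (F - (C (a - b') * f + (X - C (a ^ 2 + p * a + q)) * g - C g' * u))
    (G - (f - C (b' + a + p) * g - C g' * v)) ?_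
  · constructor
    · have := key.1; linear_combination this
    · have := key.2; linear_combination this
  · simp only [sub_comp, add_comp, mul_comp, pow_comp, C_comp, X_comp, C_add, C_sub, C_mul, C_pow]
    linear_combination h

/-- Extended recurrence relation for the principal component {P_n} of the general
quadratic decomposition of a monic orthogonal polynomial sequence:
P₀ = 1, P₁(x) = x - β₀^P with β₀^P = γ₁ + ω(a) - (a-β₀)(a-β₁), and
P_{n+2} = (x - β_{n+1}^P) P_{n+1} - γ_{n+1}^P P_n - ϱ_{n+1}^P b_{n+1} - ρ_{n+1}^P b_n,
with β_{n+1}^P = ω(a) + γ_{2n+2} + γ_{2n+3} - (β_{2n+2}+a+p)(a-β_{2n+2}),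
γ_{n+1}^P = γ_{2n+1} γ_{2n+2}, ϱ_{n+1}^P = β_{2n+2}+β_{2n+3}+p,
ρ_{n+1}^P = γ_{2n+2}(β_{2n+1}+β_{2n+2}+p). Here `aa n` is a_n. -/
theorem gqd_extended_recurrence_P (W P R aa bb : ℕ → Polynomial ℂ)
    (β : ℕ → ℂ) (γ : ℕ → ℂ) (p q a : ℂ)
    (hW0 : W 0 = 1) (hW1 : W 1 = X - C (β 0))
    (hrec : ∀ n, W (n + 2) = (X - C (β (n + 1))) * W (n + 1) - C (γ (n + 1)) * W n)
    (hγ : ∀ n, γ (n + 1) ≠ 0)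
    (hP : ∀ n, (P n).Monic ∧ (P n).natDegree = n)
    (hR : ∀ n, (R n).Monic ∧ (R n).natDegree = n)
    (haadeg : ∀ n, (aa n).degree ≤ n) (hbbdeg : ∀ n, (bb n).degree ≤ n)
    (hEven0 : W 0 = (P 0).comp (X ^ 2 + C p * X + C q))
    (hEven : ∀ n, W (2 * (n + 1)) =
      (P (n + 1)).comp (X ^ 2 + C p * X + C q) +
        (X - C a) * (aa n).comp (X ^ 2 + C p * X + C q))
    (hOdd : ∀ n, W (2 * n + 1) =
      (bb n).comp (X ^ 2 + C p * X + C q) +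
        (X - C a) * (R n).comp (X ^ 2 + C p * X + C q)) :
    P 0 = 1 ∧
    P 1 = X - C (γ 1 + (a ^ 2 + p * a + q) - (a - β 0) * (a - β 1)) ∧
    ∀ n, P (n + 2) =
      (X - C ((a ^ 2 + p * a + q) + γ (2 * n + 2) + γ (2 * n + 3) -
          (β (2 * n + 2) + a + p) * (a - β (2 * n + 2)))) * P (n + 1) -
        C (γ (2 * n + 1) * γ (2 * n + 2)) * P n -
        C (β (2 * n + 2) + β (2 * n + 3) + p) * bb (n + 1) -
        C (γ (2 * n + 2) * (β (2 * n + 1) + β (2 * n + 2) + p)) * bb n := by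
  -- P 0 = 1
  have hP0 : P 0 = 1 := by
    have h := gqd_split p q a (P 0 - 1) 0 ?_
    · linear_combination h.1
    · simp only [sub_comp, one_comp, zero_comp, mul_zero, add_zero]
      linear_combination hW0 - hEven0
  refine ⟨hP0, ?_, ?_⟩
  -- P 1
  · have e1 := hrec 0
    rw [hW1, hW0] at e1
    have e1' : (P 1).comp (X ^ 2 + C p * X + C q) +
        (X - C a) * (aa 0).comp (X ^ 2 + C p * X + C q) =
      (X - C (β 1)) * ((C (a - β 0)).comp (X ^ 2 + C p * X + C q) +
          (X - C a) * (1 : ℂ[X]).comp (X ^ 2 + C p * X + C q)) -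
        C (γ 1) * ((1 : ℂ[X]).comp (X ^ 2 + C p * X + C q) +
          (X - C a) * (0 : ℂ[X]).comp (X ^ 2 + C p * X + C q)) := by
      have hE : W 2 = (P 1).comp (X ^ 2 + C p * X + C q) +
          (X - C a) * (aa 0).comp (X ^ 2 + C p * X + C q) := by
        have := hEven 0; norm_num at this; exact this
      norm_num at e1
      rw [hE] at e1
      simp only [sub_comp, C_comp, one_comp, zero_comp, mul_zero, add_zero, mul_one, C_sub]
      linear_combination e1
    have s := (gqd_step p q a (β 1) (γ 1) _ _ _ _ _ _ e1').1
    rw [s]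
    simp only [C_add, C_sub, C_mul, C_pow]
    ring
  -- main recurrence
  · intro n
    -- decomposition of W (2*n)
    obtain ⟨v0, hv0⟩ : ∃ v0 : ℂ[X], W (2 * n) = (P n).comp (X ^ 2 + C p * X + C q) +
        (X - C a) * v0.comp (X ^ 2 + C p * X + C q) := by
      cases n with
      | zero => exact ⟨0, by simpa using hEven0⟩
      | succ m => exact ⟨aa m, hEven m⟩
    -- step 1 : from hrec (2n)
    have e1 := hrec (2 * n)
    rw [show 2 * n + 2 = 2 * (n + 1) from by ring] at e1
    rw [hEven n, hOdd n, hv0] at e1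
    have s1 := (gqd_step p q a (β (2 * n + 1)) (γ (2 * n + 1)) _ _ _ _ _ _ e1).1
    -- step 2 : from hrec (2n+1)
    have e2 := hrec (2 * n + 1)
    rw [show 2 * n + 1 + 2 = 2 * (n + 1) + 1 from by ring,
      show 2 * n + 1 + 1 = 2 * (n + 1) from by ring] at e2
    rw [hOdd (n + 1), hEven n, hOdd n] at e2
    have s2 := gqd_step p q a (β (2 * (n + 1))) (γ (2 * (n + 1))) _ _ _ _ _ _ e2
    have s2A := s2.1
    have s2B := s2.2
    -- step 3 : from hrec (2n+2)
    have e3 := hrec (2 * n + 2)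
    rw [show 2 * n + 2 + 2 = 2 * (n + 1 + 1) from by ring,
      show 2 * n + 2 + 1 = 2 * (n + 1) + 1 from by ring,
      show 2 * n + 2 = 2 * (n + 1) from by ring] at e3
    rw [hEven (n + 1), hOdd (n + 1), hEven n] at e3
    have s3 := (gqd_step p q a (β (2 * (n + 1) + 1)) (γ (2 * (n + 1) + 1)) _ _ _ _ _ _ e3).1
    rw [show 2 * (n + 1) = 2 * n + 2 from by ring] at s2A s2B s3
    rw [show 2 * n + 2 + 1 = 2 * n + 3 from by ring] at s3
    rw [show n + 1 + 1 = n + 2 from rfl] at s3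
    simp only [C_add, C_sub, C_mul, C_pow] at s1 s2A s2B s3 ⊢
    linear_combination s3 + (X - C a ^ 2 - C p * C a - C q) * s2B +
      C (β (2 * n + 2)) * s2A + C a * s2A + C p * s2A + C (γ (2 * n + 2)) * s1
end

section
/- Let {W_n} be the monic orthogonal polynomial sequence with constant recurrence coefficients β_n = β, γ_{n+1} = γ ≠ 0 (a shifted Chebyshev sequence of second kind). For its general quadratic decomposition with p = -2β and arbitrary q, a, the principal components {P_n} and {R_n} are both orthogonal, with β_n^R = q + 2γ - β² and γ_{n+1}^R = γ² for all n ≥ 0, and β_0^P = β_0^R - γ, β_{n+1}^P = β_{n+1}^R, γ_{n+1}^P = γ_{n+1}^R; in particular P_n is the co-recursive sequence R_n(-γ; x) of {R_n}. -/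
open Polynomial

noncomputable def gqdPR (b g q : ℂ) : ℕ → Polynomial ℂ × Polynomial ℂ
  | 0 => (1, 1)
  | n+1 =>
      let pr := gqdPR b g q n
      let P1 := (X - C (q - b^2)) * pr.2 - C g * pr.1
      (P1, P1 - C g * pr.2)

lemma gqd_comp_eq_zero (b q a : ℂ) (A B : Polynomial ℂ)
    (h : A.comp (X ^ 2 - C (2 * b) * X + C q) =
      (X - C a) * B.comp (X ^ 2 - C (2 * b) * X + C q)) : A = 0 ∧ B = 0 := by
  set w : Polynomial ℂ := X ^ 2 - C (2 * b) * X + C q with hw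
  have hwdeg : w.natDegree = 2 := by unfold w; compute_degree!
  have hwm : w.Monic := by unfold w; monicity!
  have hcomp : ∀ Q : Polynomial ℂ, Q ≠ 0 → Q.comp w ≠ 0 := by
    intro Q hQ hc
    have := Polynomial.leadingCoeff_comp (p := Q) (q := w) (by omega)
    rw [hc] at this
    simp [hwm.leadingCoeff] at this
    exact hQ (leadingCoeff_eq_zero.mp this.symm)
  have hA : A = 0 := by
    by_contra hA
    have hAc : A.comp w ≠ 0 := hcomp A hA
    have hB : B ≠ 0 := by
      rintro rfl
      simp at h
      exact hAc h
    have hBc : B.comp w ≠ 0 := hcomp B hB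
    have hd1 : (A.comp w).natDegree = A.natDegree * 2 := by
      rw [natDegree_comp, hwdeg]
    have hd2 : ((X - C a) * B.comp w).natDegree = 1 + B.natDegree * 2 := by
      rw [natDegree_mul (X_sub_C_ne_zero a) hBc, natDegree_X_sub_C, natDegree_comp, hwdeg]
    rw [h, hd2] at hd1
    omega
  refine ⟨hA, ?_⟩
  subst hA
  simp only [zero_comp] at h
  rcases mul_eq_zero.mp h.symm with h1 | h1
  · exact absurd h1 (X_sub_C_ne_zero a)
  · by_contra hB
    exact hcomp B hB h1

lemma gqd_unique_s17 (b q a : ℂ) (A B A' B' : Polynomial ℂ)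
    (h : A.comp (X ^ 2 - C (2 * b) * X + C q) +
        (X - C a) * B.comp (X ^ 2 - C (2 * b) * X + C q) =
      A'.comp (X ^ 2 - C (2 * b) * X + C q) +
        (X - C a) * B'.comp (X ^ 2 - C (2 * b) * X + C q)) : A = A' ∧ B = B' := by
  have h2 : (A - A').comp (X ^ 2 - C (2 * b) * X + C q) =
      (X - C a) * (B' - B).comp (X ^ 2 - C (2 * b) * X + C q) := by
    simp only [sub_comp]
    linear_combination h
  obtain ⟨h3, h4⟩ := gqd_comp_eq_zero b q a _ _ h2
  constructor
  · exact sub_eq_zero.mp h3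
  · exact (sub_eq_zero.mp h4).symm

/-- For the monic orthogonal polynomial sequence with constant recurrence
coefficients β_n = β, γ_{n+1} = γ ≠ 0, the general quadratic decomposition with
p = -2β yields orthogonal principal components: {R_n} satisfies the three-term
recurrence with β_n^R = q + 2γ - β², γ_{n+1}^R = γ², and {P_n} satisfies the same
recurrence with β₀^P = β₀^R - γ, β_{n+1}^P = β_{n+1}^R, γ_{n+1}^P = γ_{n+1}^R;
hence P_n is the co-recursive sequence R_n(-γ; x) of {R_n}. Here `aa n` is a_n. -/
theorem gqd_constant_coefficients_chebyshev (W P R aa bb : ℕ → Polynomial ℂ)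
    (b g q a : ℂ) (hg : g ≠ 0)
    (hW0 : W 0 = 1) (hW1 : W 1 = X - C b)
    (hrec : ∀ n, W (n + 2) = (X - C b) * W (n + 1) - C g * W n)
    (hP : ∀ n, (P n).Monic ∧ (P n).natDegree = n)
    (hR : ∀ n, (R n).Monic ∧ (R n).natDegree = n)
    (haadeg : ∀ n, (aa n).degree ≤ n) (hbbdeg : ∀ n, (bb n).degree ≤ n)
    (hEven0 : W 0 = (P 0).comp (X ^ 2 - C (2 * b) * X + C q))
    (hEven : ∀ n, W (2 * (n + 1)) =
      (P (n + 1)).comp (X ^ 2 - C (2 * b) * X + C q) +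
        (X - C a) * (aa n).comp (X ^ 2 - C (2 * b) * X + C q))
    (hOdd : ∀ n, W (2 * n + 1) =
      (bb n).comp (X ^ 2 - C (2 * b) * X + C q) +
        (X - C a) * (R n).comp (X ^ 2 - C (2 * b) * X + C q)) :
    (R 0 = 1 ∧ R 1 = X - C (q + 2 * g - b ^ 2) ∧
      (∀ n, R (n + 2) =
        (X - C (q + 2 * g - b ^ 2)) * R (n + 1) - C (g ^ 2) * R n) ∧
      g ^ 2 ≠ 0) ∧
    (P 0 = 1 ∧ P 1 = X - C ((q + 2 * g - b ^ 2) - g) ∧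
      (∀ n, P (n + 2) =
        (X - C (q + 2 * g - b ^ 2)) * P (n + 1) - C (g ^ 2) * P n)) := by
  set w : Polynomial ℂ := X ^ 2 - C (2 * b) * X + C q with hw
  set P' : ℕ → Polynomial ℂ := fun n => (gqdPR b g q n).1 with hP'
  set R' : ℕ → Polynomial ℂ := fun n => (gqdPR b g q n).2 with hR'
  have hP'0 : P' 0 = 1 := rfl
  have hR'0 : R' 0 = 1 := rfl
  have hP's : ∀ n, P' (n + 1) = (X - C (q - b^2)) * R' n - C g * P' n := fun n => rfl
  have hR's : ∀ n, R' (n + 1) = P' (n + 1) - C g * R' n := fun n => rfl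
  -- derived recurrences
  have hRrec : ∀ n, R' (n + 2) =
      (X - C (q + 2 * g - b ^ 2)) * R' (n + 1) - C (g ^ 2) * R' n := by
    intro n
    have e1 := hR's (n + 1)
    have e2 := hP's (n + 1)
    have e3 := hP's n
    have e4 := hR's n
    rw [e1, e2, e4]
    rw [e4] at e2
    simp only [C_add, C_sub, C_mul, C_pow, map_ofNat] at *
    ring
  have hPrec : ∀ n, P' (n + 2) =
      (X - C (q + 2 * g - b ^ 2)) * P' (n + 1) - C (g ^ 2) * P' n := by
    intro n
    have e2 := hP's (n + 1)
    have e3 := hP's n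
    have e4 := hR's n
    rw [e2, e4, e3]
    simp only [C_add, C_sub, C_mul, C_pow, map_ofNat]
    ring
  -- decomposition of W
  have key : ∀ n, W (2 * n) = (P' n).comp w ∧ W (2 * n + 1) = (X - C b) * (R' n).comp w := by
    intro n
    induction n with
    | zero => simp [hW0, hW1, hP'0, hR'0]
    | succ n ih =>
      obtain ⟨ihE, ihO⟩ := ih
      have hsq : (X - C b) * (X - C b) = w - C (q - b^2) := by
        rw [hw]; simp only [C_sub, C_mul, C_pow, map_ofNat]; ring
      have hE : W (2 * (n + 1)) = (P' (n + 1)).comp w := by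
        have : 2 * (n + 1) = 2 * n + 1 + 1 := by ring
        rw [this, show 2 * n + 1 + 1 = 2 * n + 2 from rfl, hrec (2 * n), ihE, ihO,
          hP's n]
        simp only [sub_comp, mul_comp, X_comp, C_comp]
        linear_combination ((gqdPR b g q n).2.comp w) * hsq
      refine ⟨hE, ?_⟩
      have : 2 * (n + 1) + 1 = 2 * n + 1 + 2 := by ring
      rw [this, hrec (2 * n + 1), ihO, show 2 * n + 1 + 1 = 2 * (n + 1) from by ring, hE,
        hR's n]
      simp only [sub_comp, mul_comp, X_comp, C_comp]
      ring
  -- identify R with R'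
  have hReq : ∀ n, R n = R' n := by
    intro n
    have h1 := hOdd n
    rw [(key n).2] at h1
    have h2 : (bb n).comp w + (X - C a) * (R n).comp w =
        (C (a - b) * R' n).comp w + (X - C a) * (R' n).comp w := by
      rw [← h1]
      simp only [mul_comp, C_comp, C_sub, sub_comp, add_comp, neg_comp]
      ring
    exact (gqd_unique_s17 b q a _ _ _ _ h2).2
  have hPeq : ∀ n, P n = P' n := by
    intro n
    cases n with
    | zero =>
      have h1 : (P 0).comp w + (X - C a) * (0 : Polynomial ℂ).comp w =
          (P' 0).comp w + (X - C a) * (0 : Polynomial ℂ).comp w := by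
        simp only [zero_comp, mul_zero, add_zero]
        rw [← hEven0, hW0, hP'0, one_comp]
      exact (gqd_unique_s17 b q a _ _ _ _ h1).1
    | succ n =>
      have h1 := hEven n
      rw [(key (n + 1)).1] at h1
      have h2 : (P (n + 1)).comp w + (X - C a) * (aa n).comp w =
          (P' (n + 1)).comp w + (X - C a) * (0 : Polynomial ℂ).comp w := by
        simp only [zero_comp, mul_zero, add_zero]
        exact h1.symm ▸ rfl
      exact (gqd_unique_s17 b q a _ _ _ _ h2).1
  -- compute R' 1 and P' 1
  have hR'1 : R' 1 = X - C (q + 2 * g - b ^ 2) := by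
    rw [hR's 0, hP's 0, hP'0, hR'0]
    simp only [C_add, C_sub, C_mul, C_pow, map_ofNat]
    ring
  have hP'1 : P' 1 = X - C ((q + 2 * g - b ^ 2) - g) := by
    rw [hP's 0, hP'0, hR'0]
    simp only [C_add, C_sub, C_mul, C_pow, map_ofNat]
    ring
  refine ⟨⟨?_, ?_, ?_, pow_ne_zero 2 hg⟩, ?_, ?_, ?_⟩
  · rw [hReq 0, hR'0]
  · rw [hReq 1, hR'1]
  · intro n; rw [hReq (n + 2), hReq (n + 1), hReq n]; exact hRrec n
  · rw [hPeq 0, hP'0]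
  · rw [hPeq 1, hP'1]
  · intro n; rw [hPeq (n + 2), hPeq (n + 1), hPeq n]; exact hPrec n
end
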